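/- arXiv:0806.2724 — 5 statements merged into one kernel-verified Lean document; each statement's English description precedes it below -/
import Mathlib

section
/- If a series ∑_k a_k of real numbers converges, then the series ∑_k a_k/k converges and moreover n·∑_{k≥n} a_k/k → 0 as n → ∞. -/
open Filter Topology Finset

/-!
Write `r n = ∑_{k ≥ n} a k`, so that `r → 0` and `a k = r k - r (k + 1)`. Summation by parts
against the decreasing weights `1 / k` (Abel's inequality) bounds every block `∑_{k=n}^N a k / k`
by `2 sup_{k ≥ n} |r k| / n`. This gives at once the Cauchy criterion for `∑ a k / k` and
`n * ∑_{k ≥ n} a k / k → 0`.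
-/

section Abel

variable {E : Type*} [SeminormedAddCommGroup E] [NormedSpace ℝ E]
  {r : ℕ → E} {b : ℕ → ℝ} {n : ℕ} {ε : ℝ}

/- With the boundary term `b N • r (N + 1)` added, passing from `N` to `N + 1` changes the
quantity by `-(b N - b (N + 1)) • r (N + 1)`, whose norm is at most `ε * (b N - b (N + 1))`. -/
theorem norm_sum_Icc_smul_sub_add_le (hr : ∀ k, n ≤ k → ‖r k‖ ≤ ε)
    (hb : AntitoneOn b (Set.Ici n)) (hbn : 0 ≤ b n) {N : ℕ} (hN : n ≤ N) :
    ‖∑ k ∈ Icc n N, b k • (r k - r (k + 1)) + b N • r (N + 1)‖ ≤ ε * (2 * b n - b N) := by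
  induction N, hN using Nat.le_induction with
  | base =>
    rw [Icc_self, sum_singleton, smul_sub, sub_add_cancel, norm_smul, Real.norm_of_nonneg hbn]
    nlinarith [hr n le_rfl]
  | succ N hN ih =>
    have hdrop : 0 ≤ b N - b (N + 1) :=
      sub_nonneg.2 (hb (Set.mem_Ici.2 hN) (Set.mem_Ici.2 (by omega)) N.le_succ)
    have hsplit : ∑ k ∈ Icc n (N + 1), b k • (r k - r (k + 1)) + b (N + 1) • r (N + 1 + 1) =
        (∑ k ∈ Icc n N, b k • (r k - r (k + 1)) + b N • r (N + 1)) -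
          (b N - b (N + 1)) • r (N + 1) := by
      rw [sum_Icc_succ_top (by omega)]
      simp only [smul_sub, sub_smul]
      abel
    have hstep : ‖(b N - b (N + 1)) • r (N + 1)‖ ≤ ε * (b N - b (N + 1)) := by
      rw [norm_smul, Real.norm_of_nonneg hdrop, mul_comm]
      exact mul_le_mul_of_nonneg_right (hr (N + 1) (by omega)) hdrop
    calc _ ≤ ε * (2 * b n - b N) + ε * (b N - b (N + 1)) := by
          rw [hsplit]
          exact (norm_sub_le _ _).trans (add_le_add ih hstep)
      _ = ε * (2 * b n - b (N + 1)) := by ring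

theorem norm_sum_Icc_smul_sub_le (hr : ∀ k, n ≤ k → ‖r k‖ ≤ ε)
    (hb : AntitoneOn b (Set.Ici n)) (hb0 : ∀ k, n ≤ k → 0 ≤ b k) (N : ℕ) :
    ‖∑ k ∈ Icc n N, b k • (r k - r (k + 1))‖ ≤ 2 * ε * b n := by
  have hε : 0 ≤ ε := (norm_nonneg _).trans (hr n le_rfl)
  rcases lt_or_ge N n with hNn | hnN
  · rw [Icc_eq_empty_of_lt hNn, sum_empty, norm_zero]
    exact mul_nonneg (mul_nonneg zero_le_two hε) (hb0 n le_rfl)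
  have hlast : ‖b N • r (N + 1)‖ ≤ ε * b N := by
    rw [norm_smul, Real.norm_of_nonneg (hb0 N hnN), mul_comm]
    exact mul_le_mul_of_nonneg_right (hr (N + 1) (by omega)) (hb0 N hnN)
  calc _ ≤ ‖∑ k ∈ Icc n N, b k • (r k - r (k + 1)) + b N • r (N + 1)‖ + ‖b N • r (N + 1)‖ :=
        norm_le_add_norm_add _ _
    _ ≤ ε * (2 * b n - b N) + ε * b N :=
        add_le_add (norm_sum_Icc_smul_sub_add_le hr hb (hb0 n le_rfl) hnN) hlast
    _ = 2 * ε * b n := by ring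

end Abel

theorem sum_Icc_sub_sum_Icc {M : Type*} [AddCommGroup M] (f : ℕ → M) {n N K : ℕ}
    (hnN : n ≤ N + 1) (hNK : N ≤ K) :
    ∑ k ∈ Icc n K, f k - ∑ k ∈ Icc n N, f k = ∑ k ∈ Icc (N + 1) K, f k := by
  rw [← Ico_add_one_right_eq_Icc, ← Ico_add_one_right_eq_Icc, ← Ico_add_one_right_eq_Icc,
    ← sum_Ico_consecutive f hnN (by omega : N + 1 ≤ K + 1), add_sub_cancel_left]

theorem exists_tendsto_sum_Icc_of_tail_le {E : Type*} [NormedAddCommGroup E] [CompleteSpace E]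
    {f : ℕ → E} (htail : ∀ ε > 0, ∀ᶠ m in atTop, ∀ K, ‖∑ k ∈ Icc m K, f k‖ ≤ ε) (n : ℕ) :
    ∃ s, Tendsto (fun N => ∑ k ∈ Icc n N, f k) atTop (𝓝 s) := by
  refine cauchySeq_tendsto_of_complete (Metric.cauchySeq_iff'.2 fun ε hε => ?_)
  obtain ⟨m, hm⟩ := eventually_atTop.1 (htail (ε / 2) (half_pos hε))
  refine ⟨max n m, fun K hK => ?_⟩
  rw [dist_eq_norm, sum_Icc_sub_sum_Icc f (by omega) hK]
  exact (hm _ (by omega) K).trans_lt (half_lt_self hε)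

theorem eventually_mul_abs_sum_Icc_div_le {a : ℕ → ℝ} {l : ℝ}
    (hconv : Tendsto (fun n => ∑ k ∈ Icc 1 n, a k) atTop (𝓝 l)) :
    ∀ ε > 0, ∀ᶠ n : ℕ in atTop, ∀ N, (n : ℝ) * |∑ k ∈ Icc n N, a k / k| ≤ ε := by
  set r : ℕ → ℝ := fun n => l - ∑ k ∈ Ico 1 n, a k
  have hr : Tendsto r atTop (𝓝 0) := by
    rw [← tendsto_add_atTop_iff_nat 1]
    simpa only [r, Ico_add_one_right_eq_Icc, sub_self] using hconv.const_sub l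
  have ha : ∀ k, 1 ≤ k → a k = r k - r (k + 1) := fun k hk => by
    simp only [r, sum_Ico_succ_top hk]
    ring
  intro ε hε
  filter_upwards [eventually_ge_atTop 1, eventually_forall_ge_atTop.2
    (hr.eventually (Metric.closedBall_mem_nhds 0 (half_pos hε)))] with n hn hrn N
  have hinv : AntitoneOn (fun k : ℕ => (k : ℝ)⁻¹) (Set.Ici n) := fun i hi j _ hij =>
    inv_anti₀ (Nat.cast_pos.2 (hn.trans (Set.mem_Ici.1 hi))) (Nat.cast_le.2 hij)
  have hsum : ∑ k ∈ Icc n N, a k / k = ∑ k ∈ Icc n N, (k : ℝ)⁻¹ • (r k - r (k + 1)) :=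
    sum_congr rfl fun k hk => by
      rw [ha k (hn.trans (mem_Icc.1 hk).1), smul_eq_mul, div_eq_inv_mul]
  have hbound := norm_sum_Icc_smul_sub_le (fun k hk => mem_closedBall_zero_iff.1 (hrn k hk)) hinv
    (fun k _ => inv_nonneg.2 k.cast_nonneg) N
  rw [← hsum, Real.norm_eq_abs] at hbound
  calc (n : ℝ) * |∑ k ∈ Icc n N, a k / k| ≤ n * (2 * (ε / 2) * (n : ℝ)⁻¹) := by gcongr
    _ = ε := by field_simp

theorem abel_tail (a : ℕ → ℝ) (l : ℝ)
    (hconv : Tendsto (fun n => ∑ k ∈ Finset.Icc 1 n, a k) atTop (𝓝 l)) :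
    ∃ S : ℕ → ℝ,
      (∀ n, Tendsto (fun N => ∑ k ∈ Finset.Icc n N, a k / k) atTop (𝓝 (S n))) ∧
      Tendsto (fun n : ℕ => (n : ℝ) * S n) atTop (𝓝 0) := by
  have htail := eventually_mul_abs_sum_Icc_div_le hconv
  have hcauchy : ∀ ε > 0, ∀ᶠ m : ℕ in atTop, ∀ N, ‖∑ k ∈ Icc m N, a k / k‖ ≤ ε :=
    fun ε hε => by
      filter_upwards [htail ε hε, eventually_ge_atTop 1] with m hm hm1 N
      exact (le_mul_of_one_le_left (abs_nonneg _) (Nat.one_le_cast.2 hm1)).trans (hm N)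
  choose S hS using exists_tendsto_sum_Icc_of_tail_le hcauchy
  refine ⟨S, hS, Metric.tendsto_nhds.2 fun ε hε => ?_⟩
  filter_upwards [htail (ε / 2) (half_pos hε)] with n hn
  have hlim : |(n : ℝ) * S n| ≤ ε / 2 :=
    le_of_tendsto ((hS n).const_mul (n : ℝ)).abs <| Eventually.of_forall fun N => by
      rw [abs_mul, Nat.abs_cast]
      exact hn N
  rw [Real.dist_0_eq_abs]
  exact hlim.trans_lt (half_lt_self hε)
end

section
/- Let (ρ_k)_{k≥1} be independent identically distributed real random variables with E[ρ_1^4] < ∞ and set β = E[ρ_1^2]. Then n·∑_{k≥n} k^{-2}·ρ_k^2 converges almost surely to β as n → ∞. -/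
/-!
Write `S n = ∑_{i<n} ρ_i²`; by the strong law of large numbers `S n / n → β` almost surely, so
it suffices to show, for any nonnegative sequence `X` with Cesàro means tending to `β`, that
`n ∑_{k≥n} X k / k² → β`. Summation by parts turns the tail into
`∑_{k≥n} w k · S (k+1) / (k+1) - S n / n²` with `w k = 1/(k(k+1)) + 1/k²`. Since
`n ∑_{k≥n} w k → 2` (the tail of `1/k²` is squeezed between `1/n` and `(1 + 1/n)/n` by
telescoping), a Toeplitz argument sends `n` times the first term to `2β`, while `n` times the
second is `S n / n → β`.
-/

open Filter Topology MeasureTheory ProbabilityTheory Finset Asymptotics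

noncomputable def tailSum (f : ℕ → ℝ) (n : ℕ) : ℝ := ∑' k, if n ≤ k then f k else 0

lemma sum_range_ite_le_eq_sum_Ico (f : ℕ → ℝ) (n N : ℕ) :
    ∑ k ∈ range N, (if n ≤ k then f k else 0) = ∑ k ∈ Ico n N, f k := by
  rw [← sum_filter]
  congr 1
  ext k
  simp only [mem_filter, mem_range, mem_Ico]
  omega

lemma Summable.ite_le {f : ℕ → ℝ} (hf : Summable f) (n : ℕ) :
    Summable (fun k => if n ≤ k then f k else 0) := by
  refine (hf.indicator {k | n ≤ k}).congr fun k => ?_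
  simp [Set.indicator_apply]

lemma hasSum_ite_le_of_tendsto_sum_Ico {f : ℕ → ℝ} {n : ℕ} {a : ℝ} (hf : ∀ k, n ≤ k → 0 ≤ f k)
    (h : Tendsto (fun N => ∑ k ∈ Ico n N, f k) atTop (𝓝 a)) :
    HasSum (fun k => if n ≤ k then f k else 0) a := by
  rw [hasSum_iff_tendsto_nat_of_nonneg (fun k => by split_ifs with hk; exacts [hf k hk, le_rfl])]
  simpa only [sum_range_ite_le_eq_sum_Ico] using h

lemma hasSum_ite_le_sub_succ {f : ℕ → ℝ} {n : ℕ} (hanti : AntitoneOn f (Set.Ici n))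
    (hf : Tendsto f atTop (𝓝 0)) :
    HasSum (fun k => if n ≤ k then f k - f (k + 1) else 0) (f n) := by
  refine hasSum_ite_le_of_tendsto_sum_Ico
    (fun k hk => sub_nonneg.2 (hanti hk (Set.mem_Ici.2 (hk.trans k.le_succ)) k.le_succ)) ?_
  have : Tendsto (fun N => f n - f N) atTop (𝓝 (f n)) := by simpa using hf.const_sub (f n)
  refine this.congr' ?_
  filter_upwards [eventually_ge_atTop n] with N hN
  rw [← neg_sub, ← sum_Ico_sub f hN, ← sum_neg_distrib]
  simp

lemma sum_Ico_mul_by_parts (X b : ℕ → ℝ) {n N : ℕ} (hnN : n ≤ N) :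
    ∑ k ∈ Ico n N, X k * b k =
      ∑ k ∈ Ico n N, (∑ i ∈ range (k + 1), X i) * (b k - b (k + 1))
        + (∑ i ∈ range N, X i) * b N - (∑ i ∈ range n, X i) * b n := by
  induction N, hnN using Nat.le_induction with
  | base => simp
  | succ N hnN ih =>
    rw [sum_Ico_succ_top hnN, sum_Ico_succ_top hnN, ih, sum_range_succ X N]
    ring

lemma hasSum_ite_le_mul_by_parts {X b : ℕ → ℝ} {n : ℕ} {A : ℝ}
    (hX : ∀ k, 0 ≤ X k) (hb : ∀ k, 0 ≤ b k)
    (hSb : Tendsto (fun N => (∑ i ∈ range N, X i) * b N) atTop (𝓝 0))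
    (hA : HasSum (fun k => if n ≤ k then (∑ i ∈ range (k + 1), X i) * (b k - b (k + 1)) else 0) A) :
    HasSum (fun k => if n ≤ k then X k * b k else 0) (A - (∑ i ∈ range n, X i) * b n) := by
  refine hasSum_ite_le_of_tendsto_sum_Ico (fun k _ => mul_nonneg (hX k) (hb k)) ?_
  have hpartial := hA.tendsto_sum_nat
  simp only [sum_range_ite_le_eq_sum_Ico] at hpartial
  have := (hpartial.add hSb).sub_const ((∑ i ∈ range n, X i) * b n)
  rw [add_zero] at this
  refine this.congr' ?_
  filter_upwards [eventually_ge_atTop n] with N hN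
  rw [sum_Ico_mul_by_parts X b hN]

lemma hasSum_ite_le_one_div_mul_succ {n : ℕ} (hn : 1 ≤ n) :
    HasSum (fun k => if n ≤ k then 1 / ((k : ℝ) * (k + 1)) else 0) (1 / n) := by
  have hanti : AntitoneOn (fun k : ℕ => 1 / (k : ℝ)) (Set.Ici n) := fun i hi j _ hij => by
    have : (0 : ℝ) < i := by exact_mod_cast hn.trans hi
    exact one_div_le_one_div_of_le this (by exact_mod_cast hij)
  refine (hasSum_ite_le_sub_succ hanti ?_).congr_fun fun k => ?_
  · simpa using tendsto_one_div_atTop_nhds_zero_nat (𝕜 := ℝ)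
  split_ifs with hk
  · have : (0 : ℝ) < k := by exact_mod_cast hn.trans hk
    field_simp
    push_cast
    ring
  · rfl

lemma summable_one_div_sq : Summable (fun k : ℕ => 1 / (k : ℝ) ^ 2) :=
  Real.summable_one_div_nat_pow.mpr one_lt_two

lemma summable_one_div_mul_succ : Summable (fun k : ℕ => 1 / ((k : ℝ) * (k + 1))) :=
  summable_one_div_sq.of_nonneg_of_le (fun k => by positivity) fun k => by
    rcases k.eq_zero_or_pos with rfl | hk
    · simp
    · gcongr
      nlinarith

lemma tailSum_one_div_sq_mem_Icc {n : ℕ} (hn : 1 ≤ n) :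
    tailSum (fun k => 1 / (k : ℝ) ^ 2) n ∈ Set.Icc (1 / (n : ℝ)) ((1 + 1 / n) * (1 / n)) := by
  have htel := hasSum_ite_le_one_div_mul_succ hn
  have hsq := (summable_one_div_sq.ite_le n).hasSum
  constructor
  · refine hasSum_le (fun k => ?_) htel hsq
    split_ifs with hk
    · have : (0 : ℝ) < k := by exact_mod_cast hn.trans hk
      gcongr
      nlinarith
    · rfl
  · refine hasSum_le (fun k => ?_) hsq
      (by simpa only [mul_ite, mul_zero] using htel.mul_left (1 + 1 / (n : ℝ)))
    split_ifs with hk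
    · have hk0 : (0 : ℝ) < k := by exact_mod_cast hn.trans hk
      have hnk : (1 : ℝ) / k ≤ 1 / n := by gcongr
      calc 1 / (k : ℝ) ^ 2 = (1 + 1 / k) * (1 / (k * (k + 1))) := by field_simp
        _ ≤ (1 + 1 / n) * (1 / (k * (k + 1))) := by gcongr
    · rfl

lemma tendsto_mul_tailSum_one_div_sq :
    Tendsto (fun n : ℕ => n * tailSum (fun k => 1 / (k : ℝ) ^ 2) n) atTop (𝓝 1) := by
  have hupper : Tendsto (fun n : ℕ => 1 + 1 / (n : ℝ)) atTop (𝓝 1) := by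
    simpa using tendsto_one_div_atTop_nhds_zero_nat.const_add (1 : ℝ)
  refine tendsto_of_tendsto_of_tendsto_of_le_of_le' tendsto_const_nhds hupper ?_ ?_
  all_goals
    filter_upwards [eventually_ge_atTop 1] with n hn
    have hn0 : (0 : ℝ) < n := by exact_mod_cast hn
    obtain ⟨hlow, hup⟩ := tailSum_one_div_sq_mem_Icc hn
  · rw [div_le_iff₀ hn0] at hlow
    linarith
  · rw [← mul_div_assoc, le_div_iff₀ hn0] at hup
    linarith

lemma tailSum_nonneg {f : ℕ → ℝ} (hf : ∀ k, 0 ≤ f k) (n : ℕ) : 0 ≤ tailSum f n :=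
  tsum_nonneg fun k => by split_ifs; exacts [hf k, le_rfl]

lemma isLittleO_tailSum_mul {w b : ℕ → ℝ} (hw : ∀ k, 0 ≤ w k) (hws : Summable w)
    (hb : Tendsto b atTop (𝓝 0)) :
    tailSum (fun k => w k * b k) =o[atTop] tailSum w := by
  refine isLittleO_iff.2 fun c hc => ?_
  obtain ⟨N, hN⟩ := eventually_atTop.1 (hb.eventually (Metric.closedBall_mem_nhds 0 hc))
  filter_upwards [eventually_ge_atTop N] with n hn
  have hbound : ∀ k, ‖if n ≤ k then w k * b k else 0‖ ≤ c * (if n ≤ k then w k else 0) := by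
    intro k
    split_ifs with hk
    · have hbk : ‖b k‖ ≤ c := by simpa using hN k (hn.trans hk)
      rw [norm_mul, Real.norm_of_nonneg (hw k), mul_comm]
      exact mul_le_mul_of_nonneg_right hbk (hw k)
    · simp
  rw [Real.norm_of_nonneg (tailSum_nonneg hw n), tailSum, tailSum]
  exact tsum_of_norm_bounded ((hws.ite_le n).hasSum.mul_left c) hbound

lemma tendsto_mul_tailSum_mul {w a u : ℕ → ℝ} {c L : ℝ} (hw : ∀ k, 0 ≤ w k) (hws : Summable w)
    (hwc : Tendsto (fun n => u n * tailSum w n) atTop (𝓝 c)) (ha : Tendsto a atTop (𝓝 L)) :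
    Tendsto (fun n => u n * tailSum (fun k => w k * a k) n) atTop (𝓝 (c * L)) := by
  have hwa : Summable (fun k => w k * a k) :=
    (summable_norm_iff.2 hws).mul_tendsto_const (Nat.cofinite_eq_atTop ▸ ha)
  have hwaL : Summable (fun k => w k * (a k - L)) := by
    simpa only [mul_sub] using hwa.sub (hws.mul_right L)
  have hsplit : ∀ n, tailSum (fun k => w k * a k) n
      = L * tailSum w n + tailSum (fun k => w k * (a k - L)) n := by
    intro n
    rw [tailSum, tailSum, tailSum, ← tsum_mul_left,
      ← ((hws.ite_le n).mul_left L).tsum_add (hwaL.ite_le n)]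
    exact tsum_congr fun k => by split_ifs <;> ring
  have herr : Tendsto (fun n => u n * tailSum (fun k => w k * (a k - L)) n) atTop (𝓝 0) :=
    (isLittleO_one_iff ℝ).1 (((isBigO_refl u atTop).mul_isLittleO
      (isLittleO_tailSum_mul hw hws (by simpa using ha.sub_const L))).trans_isBigO
      (hwc.isBigO_one ℝ))
  simp_rw [hsplit, mul_add, mul_left_comm (u _) L]
  simpa [mul_comm] using (hwc.const_mul L).add herr

lemma tendsto_mul_tailSum_one_div_mul_succ_add_one_div_sq :
    Tendsto (fun n : ℕ => n * tailSum (fun k => 1 / ((k : ℝ) * (k + 1)) + 1 / (k : ℝ) ^ 2) n)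
      atTop (𝓝 2) := by
  have hlim := tendsto_mul_tailSum_one_div_sq.const_add 1
  rw [one_add_one_eq_two] at hlim
  refine hlim.congr' ?_
  filter_upwards [eventually_ge_atTop 1] with n hn
  have hsum := (hasSum_ite_le_one_div_mul_succ hn).add (summable_one_div_sq.ite_le n).hasSum
  have htail : tailSum (fun k => 1 / ((k : ℝ) * (k + 1)) + 1 / (k : ℝ) ^ 2) n
      = 1 / n + tailSum (fun k => 1 / (k : ℝ) ^ 2) n :=
    (hsum.congr_fun fun k => by split_ifs <;> simp).tsum_eq
  have : (0 : ℝ) < n := by exact_mod_cast hn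
  rw [htail]
  field_simp

lemma mul_sub_one_div_sq_succ_eq {k : ℕ} (hk : 1 ≤ k) (s : ℝ) :
    s * (1 / (k : ℝ) ^ 2 - 1 / ((k + 1 : ℕ) : ℝ) ^ 2)
      = (1 / ((k : ℝ) * (k + 1)) + 1 / (k : ℝ) ^ 2) * (s / (k + 1 : ℕ)) := by
  have : (0 : ℝ) < k := by exact_mod_cast hk
  push_cast
  field_simp
  ring

theorem tendsto_mul_tailSum_div_sq_of_tendsto_average {X : ℕ → ℝ} {β : ℝ} (hX : ∀ k, 0 ≤ X k)
    (hS : Tendsto (fun n : ℕ => (∑ i ∈ range n, X i) / n) atTop (𝓝 β)) :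
    Tendsto (fun n : ℕ => (n : ℝ) * tailSum (fun k => X k / (k : ℝ) ^ 2) n) atTop (𝓝 β) := by
  let w : ℕ → ℝ := fun k => 1 / ((k : ℝ) * (k + 1)) + 1 / (k : ℝ) ^ 2
  let a : ℕ → ℝ := fun k => (∑ i ∈ range (k + 1), X i) / (k + 1 : ℕ)
  have hw : ∀ k, 0 ≤ w k := fun k => by positivity
  have hws : Summable w := summable_one_div_mul_succ.add summable_one_div_sq
  have ha : Tendsto a atTop (𝓝 β) := hS.comp (tendsto_add_atTop_nat 1)
  have hwa : Summable (fun k => w k * a k) :=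
    (summable_norm_iff.2 hws).mul_tendsto_const (Nat.cofinite_eq_atTop ▸ ha)
  have hwa_lim : Tendsto (fun n : ℕ => (n : ℝ) * tailSum (fun k => w k * a k) n)
      atTop (𝓝 (2 * β)) :=
    tendsto_mul_tailSum_mul hw hws tendsto_mul_tailSum_one_div_mul_succ_add_one_div_sq ha
  have hSb : Tendsto (fun N : ℕ => (∑ i ∈ range N, X i) * (1 / (N : ℝ) ^ 2)) atTop (𝓝 0) := by
    have := hS.mul (tendsto_one_div_atTop_nhds_zero_nat (𝕜 := ℝ))
    rw [mul_zero] at this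
    refine this.congr fun N => ?_
    rw [div_mul_div_comm, mul_one, ← sq, mul_one_div]
  have htail : ∀ n, 1 ≤ n → tailSum (fun k => X k / (k : ℝ) ^ 2) n
      = tailSum (fun k => w k * a k) n - (∑ i ∈ range n, X i) * (1 / (n : ℝ) ^ 2) := by
    intro n hn
    have hparts : HasSum (fun k => if n ≤ k then (∑ i ∈ range (k + 1), X i) *
        (1 / (k : ℝ) ^ 2 - 1 / ((k + 1 : ℕ) : ℝ) ^ 2) else 0) (tailSum (fun k => w k * a k) n) :=
      (hwa.ite_le n).hasSum.congr_fun fun k => by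
        split_ifs with hk
        exacts [mul_sub_one_div_sq_succ_eq (hn.trans hk) _, rfl]
    refine ((hasSum_ite_le_mul_by_parts hX (fun k => by positivity) hSb
      hparts).congr_fun fun k => ?_).tsum_eq
    simp only [div_eq_mul_one_div (X k)]
  have hlim := hwa_lim.sub hS
  rw [two_mul, add_sub_cancel_right] at hlim
  refine hlim.congr' ?_
  filter_upwards [eventually_ge_atTop 1] with n hn
  have : (0 : ℝ) < n := by exact_mod_cast hn
  rw [htail n hn]
  field_simp

theorem tail_iid_squares_general
    {Ω : Type*} {mΩ : MeasurableSpace Ω} (μ : Measure Ω) [IsProbabilityMeasure μ]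
    (ρ : ℕ → Ω → ℝ)
    (hindep : iIndepFun ρ μ)
    (hident : ∀ k, IdentDistrib (ρ k) (ρ 1) μ μ)
    (hL4 : Integrable (fun ω => (ρ 1 ω) ^ 4) μ)
    (β : ℝ) (hβ : β = ∫ ω, (ρ 1 ω) ^ 2 ∂μ) :
    ∀ᵐ ω ∂μ, Tendsto
      (fun n : ℕ => (n : ℝ) * ∑' k : ℕ, (if n ≤ k then (ρ k ω) ^ 2 / (k : ℝ) ^ 2 else 0))
      atTop (𝓝 β) := by
  have hsq : Measurable (fun x : ℝ => x ^ 2) := measurable_id.pow_const 2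
  have hident_sq : ∀ k, IdentDistrib (fun ω => ρ k ω ^ 2) (fun ω => ρ 0 ω ^ 2) μ μ :=
    fun k => ((hident k).trans (hident 0).symm).comp hsq
  have hint_one : Integrable (fun ω => ρ 1 ω ^ 2) μ := by
    have := integrable_norm_pow_of_le (hident 1).aemeasurable_fst.aestronglyMeasurable
      (by norm_num : 2 ≤ 4) (by simpa only [Real.norm_eq_abs, Even.pow_abs ⟨2, rfl⟩] using hL4)
    simpa [Real.norm_eq_abs] using this
  have hint : Integrable (fun ω => ρ 0 ω ^ 2) μ :=
    ((hident 0).comp hsq).integrable_iff.2 hint_one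
  have hpair : Pairwise (Function.onFun (· ⟂ᵢ[μ] ·) fun k ω => ρ k ω ^ 2) := fun i j hij =>
    (hindep.comp (fun _ x => x ^ 2) fun _ => hsq).indepFun hij
  have hmean : μ[fun ω => ρ 0 ω ^ 2] = β := hβ ▸ ((hident 0).comp hsq).integral_eq
  filter_upwards [strong_law_ae_real _ hint hpair hident_sq] with ω hω
  exact tendsto_mul_tailSum_div_sq_of_tendsto_average (fun k => sq_nonneg _) (hmean ▸ hω)

theorem tail_iid_squares
    {Ω : Type*} {mΩ : MeasurableSpace Ω} (μ : Measure Ω) [IsProbabilityMeasure μ]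
    (ρ : ℕ → Ω → ℝ)
    (hmeas : ∀ k, Measurable (ρ k))
    (hindep : iIndepFun ρ μ)
    (hident : ∀ k, IdentDistrib (ρ k) (ρ 1) μ μ)
    (hL4 : Integrable (fun ω => (ρ 1 ω) ^ 4) μ)
    (β : ℝ) (hβ : β = ∫ ω, (ρ 1 ω) ^ 2 ∂μ) :
    ∀ᵐ ω ∂μ, Tendsto
      (fun n : ℕ => (n : ℝ) * ∑' k : ℕ, (if n ≤ k then (ρ k ω) ^ 2 / (k : ℝ) ^ 2 else 0))
      atTop (𝓝 β) :=
  tail_iid_squares_general (mΩ := mΩ) μ ρ hindep hident hL4 β hβ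
end

section
/- Let (X_n) be a generalized Ottawa sequence with predictive means V_n^f = ∑_{i=1}^n p_{n,i} f(X_i) + r_n E[f(X_1)], where for each n the coefficients satisfy p_{n+1,i} = (r_{n+1}/r_n)·p_{n,i} for i ≤ n and p_{n+1,n+1} = 1 − r_{n+1}/r_n. Then for every bounded measurable f, the sequence (V_n^f)_{n≥0} is a martingale with respect to the filtration 𝒢_n = ℱ_n^X ∨ ℱ_∞^Y; consequently (X_n) is conditionally identically distributed with respect to 𝒢. -/
open Filter Topology MeasureTheory ProbabilityTheory Finset

/-! With `a_n = r_{n+1} / r_n`, which is `𝒢_n`-measurable and lies in `[0, 1]`, the recursion of the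
coefficients says precisely that `V_{n+1} = a_n V_n + (1 - a_n) f(X_{n+1})`. Conditioning on `𝒢_n`
and using the prediction rule `E[f(X_{n+1}) | 𝒢_n] = V_n` gives `E[V_{n+1} | 𝒢_n] = V_n`. The tower
property then turns `E[f(X_{n+j}) | 𝒢_n]` into `E[V_{n+j-1} | 𝒢_n] = V_n = E[f(X_{n+1}) | 𝒢_n]`. -/

namespace MeasureTheory

variable {Ω : Type*} {m : MeasurableSpace Ω} {μ : Measure Ω} {𝒢 : Filtration ℕ m}

theorem martingale_of_ae_eq_convex_comb [IsFiniteMeasure μ] {M g A : ℕ → Ω → ℝ}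
    (hM : StronglyAdapted 𝒢 M) (hA : ∀ n, StronglyMeasurable[𝒢 n] (A n))
    (hA_mem : ∀ n, ∀ᵐ ω ∂μ, A n ω ∈ Set.Icc (0 : ℝ) 1)
    (hg : ∀ n, Integrable (g (n + 1)) μ) (hpred : ∀ n, μ[g (n + 1) | 𝒢 n] =ᵐ[μ] M n)
    (hrec : ∀ n, M (n + 1) =ᵐ[μ] A n * M n + (1 - A n) * g (n + 1)) :
    Martingale M 𝒢 μ := by
  have hM_int : ∀ n, Integrable (M n) μ := fun n => integrable_condExp.congr (hpred n)
  refine martingale_nat hM hM_int fun n => ?_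
  have hA_le : ∀ᵐ ω ∂μ, ‖A n ω‖ ≤ 1 := by
    filter_upwards [hA_mem n] with ω ⟨h0, h1⟩
    rw [Real.norm_eq_abs, abs_le]; constructor <;> linarith
  have hB_le : ∀ᵐ ω ∂μ, ‖(1 - A n) ω‖ ≤ 1 := by
    filter_upwards [hA_mem n] with ω ⟨h0, h1⟩
    rw [Pi.sub_apply, Pi.one_apply, Real.norm_eq_abs, abs_le]; constructor <;> linarith
  have hA_meas : StronglyMeasurable (A n) := (hA n).mono (𝒢.le n)
  have hB : StronglyMeasurable[𝒢 n] (1 - A n) := stronglyMeasurable_const.sub (hA n)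
  have hAM_int : Integrable (A n * M n) μ := (hM_int n).bdd_mul hA_meas.aestronglyMeasurable hA_le
  have hBg_int : Integrable ((1 - A n) * g (n + 1)) μ :=
    (hg n).bdd_mul (hB.mono (𝒢.le n)).aestronglyMeasurable hB_le
  symm
  calc μ[M (n + 1) | 𝒢 n]
      =ᵐ[μ] μ[A n * M n | 𝒢 n] + μ[(1 - A n) * g (n + 1) | 𝒢 n] :=
        (condExp_congr_ae (hrec n)).trans (condExp_add hAM_int hBg_int _)
    _ =ᵐ[μ] A n * M n + (1 - A n) * M n := by
        rw [condExp_of_stronglyMeasurable (𝒢.le n) ((hA n).mul (hM n)) hAM_int]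
        refine EventuallyEq.add EventuallyEq.rfl ?_
        exact (condExp_stronglyMeasurable_mul_of_bound (𝒢.le n) hB (hg n) 1 hB_le).trans
          (EventuallyEq.mul EventuallyEq.rfl (hpred n))
    _ = M n := by ring

theorem Martingale.condExp_add_succ_ae_eq [IsFiniteMeasure μ] {M g : ℕ → Ω → ℝ}
    (hM : Martingale M 𝒢 μ) (hpred : ∀ n, μ[g (n + 1) | 𝒢 n] =ᵐ[μ] M n) (n k : ℕ) :
    μ[g (n + k + 1) | 𝒢 n] =ᵐ[μ] M n :=
  calc μ[g (n + k + 1) | 𝒢 n]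
      =ᵐ[μ] μ[μ[g (n + k + 1) | 𝒢 (n + k)] | 𝒢 n] :=
        (condExp_condExp_of_le (𝒢.mono (Nat.le_add_right n k)) (𝒢.le (n + k))).symm
    _ =ᵐ[μ] μ[M (n + k) | 𝒢 n] := condExp_congr_ae (hpred (n + k))
    _ =ᵐ[μ] M n := hM.condExp_ae_eq (Nat.le_add_right n k)

end MeasureTheory

section PredictiveMean

variable {Ω : Type*}

/-- The paper's `V_n^f`, with `F i = f ∘ X i` and `c = E[f(X_1)]`. -/
def predictiveMean (p : ℕ → ℕ → Ω → ℝ) (r : ℕ → Ω → ℝ) (F : ℕ → Ω → ℝ) (c : ℝ) (n : ℕ)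
    (ω : Ω) : ℝ :=
  (∑ i ∈ Icc 1 n, p n i ω * F i ω) + r n ω * c

theorem predictiveMean_succ {p : ℕ → ℕ → Ω → ℝ} {r F : ℕ → Ω → ℝ} {c : ℝ} {n : ℕ} {ω : Ω}
    (hr : r n ω ≠ 0) (hp : ∀ i ∈ Icc 1 n, p (n + 1) i ω = r (n + 1) ω / r n ω * p n i ω)
    (hdiag : p (n + 1) (n + 1) ω = 1 - r (n + 1) ω / r n ω) :
    predictiveMean p r F c (n + 1) ω =
      r (n + 1) ω / r n ω * predictiveMean p r F c n ω
        + (1 - r (n + 1) ω / r n ω) * F (n + 1) ω := by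
  have hsum : ∑ i ∈ Icc 1 n, p (n + 1) i ω * F i ω
      = r (n + 1) ω / r n ω * ∑ i ∈ Icc 1 n, p n i ω * F i ω := by
    rw [mul_sum]
    exact sum_congr rfl fun i hi => by rw [hp i hi, mul_assoc]
  have hr_cancel : r (n + 1) ω / r n ω * r n ω = r (n + 1) ω := div_mul_cancel₀ _ hr
  simp only [predictiveMean]
  rw [sum_Icc_succ_top (Nat.le_add_left 1 n), hsum, hdiag]
  linear_combination (-c) * hr_cancel

theorem stronglyMeasurable_predictiveMean {m : MeasurableSpace Ω} {p : ℕ → ℕ → Ω → ℝ}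
    {r F : ℕ → Ω → ℝ} {c : ℝ} {n : ℕ} (hp : ∀ i ∈ Icc 1 n, StronglyMeasurable[m] (p n i))
    (hr : StronglyMeasurable[m] (r n)) (hF : ∀ i ∈ Icc 1 n, StronglyMeasurable[m] (F i)) :
    StronglyMeasurable[m] (predictiveMean p r F c n) :=
  (stronglyMeasurable_fun_sum _ fun i hi => (hp i hi).mul (hF i hi)).add
    (hr.mul stronglyMeasurable_const)

end PredictiveMean

theorem gos_predictive_mean_martingale_and_cid_general
    {Ω : Type*} {m : MeasurableSpace Ω} (μ : Measure Ω) [IsProbabilityMeasure μ]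
    {E : Type*} [MeasurableSpace E]
    (𝒢 : Filtration ℕ m)
    (X : ℕ → Ω → E) (r : ℕ → Ω → ℝ) (p : ℕ → ℕ → Ω → ℝ)
    -- adaptedness of the observations
    (hX : ∀ i n, 1 ≤ i → i ≤ n → Measurable[𝒢 n] (X i))
    -- the coefficients are `𝒢_0`-measurable (they are functions of the `Y`'s)
    (hrmeas : ∀ n, StronglyMeasurable[𝒢 0] (r n))
    (hpmeas : ∀ n i, StronglyMeasurable[𝒢 0] (p n i))
    -- `r_0 = 1`, positivity and monotonicity of the weights
    (hrpos : ∀ n, ∀ᵐ ω ∂μ, 0 < r n ω)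
    (hrdec : ∀ n, ∀ᵐ ω ∂μ, r (n + 1) ω ≤ r n ω)
    -- recursion of the coefficients
    (hprec : ∀ n i, 1 ≤ i → i ≤ n →
      ∀ᵐ ω ∂μ, p (n + 1) i ω = (r (n + 1) ω / r n ω) * p n i ω)
    (hpdiag : ∀ n, ∀ᵐ ω ∂μ, p (n + 1) (n + 1) ω = 1 - r (n + 1) ω / r n ω)
    -- the prediction rule: `V_n^f` is a version of `E[f(X_{n+1}) | 𝒢_n]`
    (hpred : ∀ (f : E → ℝ), Measurable f → (∃ C, ∀ x, |f x| ≤ C) → ∀ n,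
      μ[(fun ω => f (X (n + 1) ω)) | 𝒢 n]
        =ᵐ[μ] fun ω =>
          (∑ i ∈ Finset.Icc 1 n, p n i ω * f (X i ω)) + r n ω * ∫ ω', f (X 1 ω') ∂μ) :
    ∀ (f : E → ℝ), Measurable f → (∃ C, ∀ x, |f x| ≤ C) →
      (Martingale
        (fun n ω =>
          (∑ i ∈ Finset.Icc 1 n, p n i ω * f (X i ω)) + r n ω * ∫ ω', f (X 1 ω') ∂μ)
        𝒢 μ) ∧
      (∀ n j, 1 ≤ j →
        μ[(fun ω => f (X (n + j) ω)) | 𝒢 n] =ᵐ[μ] μ[(fun ω => f (X (n + 1) ω)) | 𝒢 n]) := by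
  intro f hf hf_bdd
  have h𝒢₀ : ∀ n, 𝒢 0 ≤ 𝒢 n := fun n => 𝒢.mono n.zero_le
  set F : ℕ → Ω → ℝ := fun i ω => f (X i ω)
  have hF : ∀ i n, 1 ≤ i → i ≤ n → StronglyMeasurable[𝒢 n] (F i) := fun i n hi hin =>
    (hf.comp (hX i n hi hin)).stronglyMeasurable
  have hpred_f : ∀ n, μ[F (n + 1) | 𝒢 n] =ᵐ[μ] predictiveMean p r F (∫ ω, F 1 ω ∂μ) n :=
    hpred f hf hf_bdd
  have hV : Martingale (predictiveMean p r F (∫ ω, F 1 ω ∂μ)) 𝒢 μ := by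
    refine martingale_of_ae_eq_convex_comb (A := fun n => r (n + 1) / r n)
      (fun n => stronglyMeasurable_predictiveMean
        (fun i _ => (hpmeas n i).mono (h𝒢₀ n)) ((hrmeas n).mono (h𝒢₀ n))
        fun i hi => hF i n (mem_Icc.1 hi).1 (mem_Icc.1 hi).2)
      (fun n => ?_) (fun n => ?_) (fun n => ?_) hpred_f (fun n => ?_)
    · exact (((hrmeas (n + 1)).mono (h𝒢₀ n)).measurable.div
        ((hrmeas n).mono (h𝒢₀ n)).measurable).stronglyMeasurable
    · filter_upwards [hrpos n, hrpos (n + 1), hrdec n] with ω hn hn1 hdec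
      exact ⟨div_nonneg hn1.le hn.le, (div_le_one hn).2 hdec⟩
    · obtain ⟨C, hC⟩ := hf_bdd
      exact .of_bound ((hF (n + 1) (n + 1) n.succ_pos le_rfl).mono (𝒢.le _)).aestronglyMeasurable
        C (ae_of_all _ fun ω => hC _)
    · filter_upwards [hrpos n, hpdiag n, (eventually_all_finset (Icc 1 n)).2 fun i hi =>
          hprec n i (mem_Icc.1 hi).1 (mem_Icc.1 hi).2] with ω hn hdiag hp
      exact predictiveMean_succ hn.ne' hp hdiag
  refine ⟨hV, fun n j hj => ?_⟩
  obtain ⟨k, rfl⟩ := Nat.exists_eq_add_of_le' hj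
  exact (hV.condExp_add_succ_ae_eq hpred_f n k).trans (hpred_f n).symm

/-- For a generalized Ottawa sequence, the predictive means `V_n^f` form a
`𝒢`-martingale and consequently the sequence is conditionally identically
distributed with respect to `𝒢`. -/
theorem gos_predictive_mean_martingale_and_cid
    {Ω : Type*} {m : MeasurableSpace Ω} (μ : Measure Ω) [IsProbabilityMeasure μ]
    {E : Type*} [MeasurableSpace E]
    (𝒢 : Filtration ℕ m)
    (X : ℕ → Ω → E) (r : ℕ → Ω → ℝ) (p : ℕ → ℕ → Ω → ℝ)
    -- adaptedness of the observations
    (hX : ∀ i n, 1 ≤ i → i ≤ n → Measurable[𝒢 n] (X i))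
    -- the coefficients are `𝒢_0`-measurable (they are functions of the `Y`'s)
    (hrmeas : ∀ n, StronglyMeasurable[𝒢 0] (r n))
    (hpmeas : ∀ n i, StronglyMeasurable[𝒢 0] (p n i))
    -- `r_0 = 1`, positivity and monotonicity of the weights
    (hr0 : ∀ ω, r 0 ω = 1)
    (hrpos : ∀ n, ∀ᵐ ω ∂μ, 0 < r n ω)
    (hrdec : ∀ n, ∀ᵐ ω ∂μ, r (n + 1) ω ≤ r n ω)
    -- recursion of the coefficients
    (hprec : ∀ n i, 1 ≤ i → i ≤ n →
      ∀ᵐ ω ∂μ, p (n + 1) i ω = (r (n + 1) ω / r n ω) * p n i ω)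
    (hpdiag : ∀ n, ∀ᵐ ω ∂μ, p (n + 1) (n + 1) ω = 1 - r (n + 1) ω / r n ω)
    -- the prediction rule: `V_n^f` is a version of `E[f(X_{n+1}) | 𝒢_n]`
    (hpred : ∀ (f : E → ℝ), Measurable f → (∃ C, ∀ x, |f x| ≤ C) → ∀ n,
      μ[(fun ω => f (X (n + 1) ω)) | 𝒢 n]
        =ᵐ[μ] fun ω =>
          (∑ i ∈ Finset.Icc 1 n, p n i ω * f (X i ω)) + r n ω * ∫ ω', f (X 1 ω') ∂μ) :
    ∀ (f : E → ℝ), Measurable f → (∃ C, ∀ x, |f x| ≤ C) →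
      (Martingale
        (fun n ω =>
          (∑ i ∈ Finset.Icc 1 n, p n i ω * f (X i ω)) + r n ω * ∫ ω', f (X 1 ω') ∂μ)
        𝒢 μ) ∧
      (∀ n j, 1 ≤ j →
        μ[(fun ω => f (X (n + j) ω)) | 𝒢 n] =ᵐ[μ] μ[(fun ω => f (X (n + 1) ω)) | 𝒢 n]) :=
  gos_predictive_mean_martingale_and_cid_general μ 𝒢 X r p hX hrmeas hpmeas hrpos hrdec hprec hpdiag
    hpred
end

section
/- Let (Y_i)_{i≥1} be i.i.d. positive random variables with mean m > 0 and let r_n = θ/(θ + ∑_{i=1}^n Y_i) for θ > 0. Then (1/log n)·∑_{j=1}^n r_j → θ/m almost surely, and (1/log n)·∑_{j=1}^n r_j(1 − r_j) → θ/m almost surely. -/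
open Filter Topology MeasureTheory ProbabilityTheory Finset

/-!
By the strong law of large numbers `∑_{i ≤ j} Y_i / j → m` almost surely, hence `j r_j → θ / m`,
and also `j r_j (1 - r_j) → θ / m` since `r_j → 0`. A sequence `f` with `j f_j → L` has
`∑_{j ≤ n} f_j` a Cesàro average of `j f_j` with weights `1 / j`, whose total is the harmonic
number `H_n ~ log n`; so `(∑_{j ≤ n} f_j) / log n → L`.
-/

theorem Filter.Tendsto.div_sum_range_mul_of_nonneg {a d : ℕ → ℝ} {L : ℝ}
    (hd : Tendsto d atTop (𝓝 L)) (ha : ∀ i, 0 ≤ a i)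
    (hsum : Tendsto (fun n ↦ ∑ i ∈ range n, a i) atTop atTop) :
    Tendsto (fun n ↦ (∑ i ∈ range n, a i * d i) / ∑ i ∈ range n, a i) atTop (𝓝 L) := by
  have herr : (fun i ↦ a i * (d i - L)) =o[atTop] a := by
    have := ((Asymptotics.isLittleO_one_iff ℝ).2 (tendsto_sub_nhds_zero_iff.2 hd)).mul_isBigO
      (Asymptotics.isBigO_refl a atTop)
    simpa only [mul_comm, mul_one] using this
  have hlim : Tendsto (fun n ↦ L + (∑ i ∈ range n, a i * (d i - L)) / ∑ i ∈ range n, a i)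
      atTop (𝓝 L) := by
    simpa using (herr.sum_range ha hsum).tendsto_div_nhds_zero.const_add L
  refine hlim.congr' ?_
  filter_upwards [hsum.eventually_gt_atTop 0] with n hn
  simp only [mul_sub, sum_sub_distrib, ← sum_mul]
  field_simp
  ring

theorem tendsto_harmonic_div_log :
    Tendsto (fun n : ℕ ↦ (harmonic n : ℝ) / Real.log n) atTop (𝓝 1) := by
  have hlog : Tendsto (fun n : ℕ ↦ Real.log n) atTop atTop :=
    Real.tendsto_log_atTop.comp tendsto_natCast_atTop_atTop
  have h := (Real.tendsto_harmonic_sub_log.div_atTop hlog).const_add 1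
  rw [add_zero] at h
  refine h.congr' ?_
  filter_upwards [hlog.eventually_gt_atTop 0] with n hn
  field_simp
  ring

theorem tendsto_sum_Icc_div_log_of_tendsto_mul {f : ℕ → ℝ} {L : ℝ}
    (h : Tendsto (fun j : ℕ ↦ (j : ℝ) * f j) atTop (𝓝 L)) :
    Tendsto (fun n : ℕ ↦ (∑ j ∈ Icc 1 n, f j) / Real.log n) atTop (𝓝 L) := by
  have hd : Tendsto (fun i : ℕ ↦ ((i + 1 : ℕ) : ℝ) * f (i + 1)) atTop (𝓝 L) :=
    (tendsto_add_atTop_iff_nat 1).2 h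
  have hsum : Tendsto (fun n ↦ ∑ i ∈ range n, (((i + 1 : ℕ) : ℝ))⁻¹) atTop atTop := by
    simpa [one_div] using Real.tendsto_sum_range_one_div_nat_succ_atTop
  have hcesaro := hd.div_sum_range_mul_of_nonneg (fun i ↦ by positivity) hsum
  have h := hcesaro.mul tendsto_harmonic_div_log
  rw [mul_one] at h
  refine h.congr' ?_
  filter_upwards [eventually_ne_atTop 0] with n hn
  have hH : (harmonic n : ℝ) ≠ 0 := by exact_mod_cast (harmonic_pos hn).ne'
  have hnum : ∑ i ∈ range n, (((i + 1 : ℕ) : ℝ))⁻¹ * (((i + 1 : ℕ) : ℝ) * f (i + 1))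
      = ∑ j ∈ Icc 1 n, f j := by
    rw [← Ico_add_one_right_eq_Icc, sum_Ico_eq_sum_range, Nat.add_sub_cancel]
    refine sum_congr rfl fun i _ ↦ ?_
    rw [inv_mul_cancel_left₀ (by positivity), add_comm]
  have hden : ∑ i ∈ range n, (((i + 1 : ℕ) : ℝ))⁻¹ = harmonic n := by
    simp [harmonic]
  rw [hnum, hden, div_mul_div_cancel₀ hH]

theorem tendsto_mul_div_add_of_tendsto_div {s : ℕ → ℝ} {c m : ℝ} (hm : m ≠ 0)
    (hs : Tendsto (fun n : ℕ ↦ s n / n) atTop (𝓝 m)) :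
    Tendsto (fun n : ℕ ↦ n * (c / (c + s n))) atTop (𝓝 (c / m)) := by
  have hden : Tendsto (fun n : ℕ ↦ c / n + s n / n) atTop (𝓝 m) := by
    simpa using (tendsto_const_div_atTop_nhds_zero_nat c).add hs
  have hlim : Tendsto (fun n : ℕ ↦ c / (c / n + s n / n)) atTop (𝓝 (c / m)) :=
    tendsto_const_nhds.div hden hm
  refine hlim.congr fun n ↦ ?_
  rw [← add_div, div_div_eq_mul_div]
  ring

theorem tendsto_mul_mul_one_sub_of_tendsto_mul {r : ℕ → ℝ} {L : ℝ}
    (h : Tendsto (fun n : ℕ ↦ n * r n) atTop (𝓝 L)) :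
    Tendsto (fun n : ℕ ↦ n * (r n * (1 - r n))) atTop (𝓝 L) := by
  have hr : Tendsto r atTop (𝓝 0) := by
    refine (h.div_atTop tendsto_natCast_atTop_atTop).congr' ?_
    filter_upwards [eventually_ne_atTop 0] with n hn
    field_simp
  simpa [mul_assoc] using h.mul (hr.const_sub 1)

theorem ProbabilityTheory.strong_law_ae_Icc {Ω : Type*} {mΩ : MeasurableSpace Ω}
    {μ : Measure Ω} (Y : ℕ → Ω → ℝ) (hint : Integrable (Y 1) μ)
    (hindep : Pairwise fun i j ↦ IndepFun (Y i) (Y j) μ)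
    (hident : ∀ i, IdentDistrib (Y i) (Y 1) μ μ) :
    ∀ᵐ ω ∂μ, Tendsto (fun n : ℕ ↦ (∑ i ∈ Icc 1 n, Y i ω) / n) atTop (𝓝 μ[Y 1]) := by
  have hshifted := strong_law_ae (fun i ↦ Y (i + 1)) hint (fun i j hij ↦ hindep (by omega))
    fun i ↦ hident (i + 1)
  filter_upwards [hshifted] with ω hω
  refine hω.congr fun n ↦ ?_
  rw [smul_eq_mul, inv_mul_eq_div, range_eq_Ico, sum_Ico_add' (fun i ↦ Y i ω)]
  rfl

theorem log_limits_randomly_reinforced_general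
    {Ω : Type*} {mΩ : MeasurableSpace Ω} (μ : Measure Ω)
    (Y : ℕ → Ω → ℝ) (θ m : ℝ) (hm : 0 < m)
    (hindep : iIndepFun Y μ)
    (hident : ∀ i, IdentDistrib (Y i) (Y 1) μ μ)
    (hint : Integrable (Y 1) μ) (hmean : ∫ ω, Y 1 ω ∂μ = m)
    (r : ℕ → Ω → ℝ)
    (hr : ∀ n ω, r n ω = θ / (θ + ∑ i ∈ Finset.Icc 1 n, Y i ω)) :
    (∀ᵐ ω ∂μ, Tendsto (fun n : ℕ => (∑ j ∈ Finset.Icc 1 n, r j ω) / Real.log n)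
      atTop (𝓝 (θ / m))) ∧
    (∀ᵐ ω ∂μ, Tendsto
      (fun n : ℕ => (∑ j ∈ Finset.Icc 1 n, r j ω * (1 - r j ω)) / Real.log n)
      atTop (𝓝 (θ / m))) := by
  have hslln := strong_law_ae_Icc Y hint (fun i j hij ↦ hindep.indepFun hij) hident
  rw [hmean] at hslln
  have hrate : ∀ᵐ ω ∂μ, Tendsto (fun j : ℕ ↦ j * r j ω) atTop (𝓝 (θ / m)) := by
    filter_upwards [hslln] with ω hω
    simpa only [hr] using tendsto_mul_div_add_of_tendsto_div (c := θ) hm.ne' hω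
  constructor
  · filter_upwards [hrate] with ω hω
    exact tendsto_sum_Icc_div_log_of_tendsto_mul hω
  · filter_upwards [hrate] with ω hω
    exact tendsto_sum_Icc_div_log_of_tendsto_mul (tendsto_mul_mul_one_sub_of_tendsto_mul hω)

theorem log_limits_randomly_reinforced
    {Ω : Type*} {mΩ : MeasurableSpace Ω} (μ : Measure Ω) [IsProbabilityMeasure μ]
    (Y : ℕ → Ω → ℝ) (θ m : ℝ) (hθ : 0 < θ) (hm : 0 < m)
    (hmeas : ∀ i, Measurable (Y i))
    (hindep : iIndepFun Y μ)
    (hident : ∀ i, IdentDistrib (Y i) (Y 1) μ μ)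
    (hposY : ∀ i, ∀ᵐ ω ∂μ, 0 < Y i ω)
    (hint : Integrable (Y 1) μ) (hmean : ∫ ω, Y 1 ω ∂μ = m)
    (r : ℕ → Ω → ℝ)
    (hr : ∀ n ω, r n ω = θ / (θ + ∑ i ∈ Finset.Icc 1 n, Y i ω)) :
    (∀ᵐ ω ∂μ, Tendsto (fun n : ℕ => (∑ j ∈ Finset.Icc 1 n, r j ω) / Real.log n)
      atTop (𝓝 (θ / m))) ∧
    (∀ᵐ ω ∂μ, Tendsto
      (fun n : ℕ => (∑ j ∈ Finset.Icc 1 n, r j ω * (1 - r j ω)) / Real.log n)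
      atTop (𝓝 (θ / m))) :=
  log_limits_randomly_reinforced_general (mΩ := mΩ) μ Y θ m hm hindep hident hint hmean r hr
end

section
/- Let (X_n) be a sequence of random variables with values in a measurable space E, adapted to a filtration 𝒢 = (𝒢_n)_{n≥0}. Then (X_n) is conditionally identically distributed with respect to 𝒢 (i.e., E[f(X_{n+j}) | 𝒢_n] = E[f(X_{n+1}) | 𝒢_n] a.s. for all n ≥ 0, j ≥ 1 and bounded measurable f) if and only if for every bounded measurable f the sequence V_n^f := E[f(X_{n+1}) | 𝒢_n] is a 𝒢-martingale. -/
/-!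
By the tower property, `E[V_j | 𝒢_n] = E[Y_{j+1} | 𝒢_n]` for `n ≤ j`, where
`V_n = E[Y_{n+1} | 𝒢_n]`. So the martingale property of `(V_n)` says exactly that
`E[Y_{n+j} | 𝒢_n] = E[Y_{n+1} | 𝒢_n]` for `j ≥ 1`; applied to `Y_n = f(X_n)` this is
conditional identity in distribution.
-/

open MeasureTheory

namespace MeasureTheory

variable {Ω F : Type*} {m : MeasurableSpace Ω} {μ : Measure Ω}
  [NormedAddCommGroup F] [NormedSpace ℝ F] [CompleteSpace F]
  {𝒢 : Filtration ℕ m} [SigmaFiniteFiltration μ 𝒢]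

theorem martingale_condExp_succ_iff (Y : ℕ → Ω → F) :
    Martingale (fun n => μ[Y (n + 1) | 𝒢 n]) 𝒢 μ ↔
      ∀ n j : ℕ, 1 ≤ j → μ[Y (n + j) | 𝒢 n] =ᵐ[μ] μ[Y (n + 1) | 𝒢 n] := by
  constructor
  · intro hV n j hj
    obtain ⟨k, rfl⟩ : ∃ k, j = k + 1 := ⟨j - 1, by omega⟩
    calc μ[Y (n + (k + 1)) | 𝒢 n]
        =ᵐ[μ] μ[μ[Y (n + k + 1) | 𝒢 (n + k)] | 𝒢 n] :=
          (condExp_condExp_of_le (𝒢.mono (Nat.le_add_right n k)) (𝒢.le _)).symm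
      _ =ᵐ[μ] μ[Y (n + 1) | 𝒢 n] := hV.condExp_ae_eq (Nat.le_add_right n k)
  · intro hcid
    refine ⟨fun n => stronglyMeasurable_condExp, fun i j hij => ?_⟩
    calc μ[μ[Y (j + 1) | 𝒢 j] | 𝒢 i]
        =ᵐ[μ] μ[Y (j + 1) | 𝒢 i] := condExp_condExp_of_le (𝒢.mono hij) (𝒢.le j)
      _ = μ[Y (i + (j + 1 - i)) | 𝒢 i] := by rw [Nat.add_sub_of_le (by omega)]
      _ =ᵐ[μ] μ[Y (i + 1) | 𝒢 i] := hcid i (j + 1 - i) (by omega)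

end MeasureTheory

theorem cid_iff_predictive_mean_martingale_general
    {Ω : Type*} {m : MeasurableSpace Ω} (μ : Measure Ω) [IsProbabilityMeasure μ]
    {E : Type*} [MeasurableSpace E]
    (𝒢 : Filtration ℕ m) (X : ℕ → Ω → E) :
    (∀ (f : E → ℝ), Measurable f → (∃ C, ∀ x, |f x| ≤ C) →
        ∀ (n j : ℕ), 1 ≤ j →
          μ[(fun ω => f (X (n + j) ω)) | 𝒢 n] =ᵐ[μ] μ[(fun ω => f (X (n + 1) ω)) | 𝒢 n])
      ↔
    (∀ (f : E → ℝ), Measurable f → (∃ C, ∀ x, |f x| ≤ C) →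
        Martingale (fun n => μ[(fun ω => f (X (n + 1) ω)) | 𝒢 n]) 𝒢 μ) :=
  forall_congr' fun f => forall₂_congr fun _ _ =>
    (martingale_condExp_succ_iff fun n ω => f (X n ω)).symm

/-- A `𝒢`-adapted sequence is conditionally identically distributed with respect to `𝒢`
if and only if, for every bounded measurable `f`, the predictive means
`V_n^f = E[f(X_{n+1}) | 𝒢_n]` form a `𝒢`-martingale. -/
theorem cid_iff_predictive_mean_martingale
    {Ω : Type*} {m : MeasurableSpace Ω} (μ : Measure Ω) [IsProbabilityMeasure μ]
    {E : Type*} [MeasurableSpace E]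
    (𝒢 : Filtration ℕ m) (X : ℕ → Ω → E)
    (hX : ∀ n, Measurable[𝒢 n] (X n)) :
    (∀ (f : E → ℝ), Measurable f → (∃ C, ∀ x, |f x| ≤ C) →
        ∀ (n j : ℕ), 1 ≤ j →
          μ[(fun ω => f (X (n + j) ω)) | 𝒢 n] =ᵐ[μ] μ[(fun ω => f (X (n + 1) ω)) | 𝒢 n])
      ↔
    (∀ (f : E → ℝ), Measurable f → (∃ C, ∀ x, |f x| ≤ C) →
        Martingale (fun n => μ[(fun ω => f (X (n + 1) ω)) | 𝒢 n]) 𝒢 μ) :=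
  cid_iff_predictive_mean_martingale_general μ 𝒢 X
end
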